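/- arXiv:1003.6090 — 2 statements merged into one kernel-verified Lean document; each statement's English description precedes it below -/
import Mathlib

section
/- In the setting of two consecutive squares of a (generalized) BGG construction: let A_k, A_{k+1}, A_{k+2} be spaces with subspaces Im∂* ⊆ Ker∂* in each, H_k = Ker∂*_k/Im∂*_k with projections Π_k, linear maps E_k : A_k → A_{k+1}, E_{k+1} : A_{k+1} → A_{k+2}, and splitting operators L_k : H_k → Ker∂*_k, L_{k+1} : H_{k+1} → Ker∂*_{k+1} characterized by: L_j(σ) ∈ Ker∂*_j, Π_j(L_j σ) = σ, E_j(L_j σ) ∈ Ker∂*_{j+1}, and uniqueness of such lifts. Define D_k = Π_{k+1} ∘ E_k ∘ L_k. Then E_k ∘ L_k = L_{k+1} ∘ D_k holds if and only if ∂*_{k+2}(E_{k+1}(E_k(L_k(σ)))) = 0 for all σ ∈ H_k. -/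
/-- commutativity criterion for a BGG square (Theorem 3.2 of the paper).
`ds₀, ds₁, ds₂` are the codifferentials on `A₀, A₁, A₂` (so `Ker∂*_j = ker ds_j`);
`Π₀, Π₁` are the projections onto the homologies `H₀, H₁`, and `L₀, L₁` are the
splitting operators, characterized by: `ds_j (L_j σ) = 0`, `Π_j (L_j σ) = σ`,
`ds_{j+1} (E_j (L_j σ)) = 0`, such lifts being unique for `L₁`.
With `D := Π₁ ∘ E₀ ∘ L₀`, the square commutes (`E₀ ∘ L₀ = L₁ ∘ D`) iff
`∂*₂ (E₁ (E₀ (L₀ σ))) = 0` for all `σ ∈ H₀`. -/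
theorem bgg_square_commutes_iff
    {K : Type*} [Field K] {A₀ A₁ A₂ P₀ P₁ P₂ H₀ H₁ : Type*}
    [AddCommGroup A₀] [Module K A₀] [AddCommGroup A₁] [Module K A₁]
    [AddCommGroup A₂] [Module K A₂]
    [AddCommGroup P₀] [Module K P₀] [AddCommGroup P₁] [Module K P₁]
    [AddCommGroup P₂] [Module K P₂]
    [AddCommGroup H₀] [Module K H₀] [AddCommGroup H₁] [Module K H₁]
    (ds₀ : A₀ →ₗ[K] P₀) (ds₁ : A₁ →ₗ[K] P₁) (ds₂ : A₂ →ₗ[K] P₂)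
    (E₀ : A₀ →ₗ[K] A₁) (E₁ : A₁ →ₗ[K] A₂)
    (Pi₀ : A₀ →ₗ[K] H₀) (Pi₁ : A₁ →ₗ[K] H₁)
    (L₀ : H₀ →ₗ[K] A₀) (L₁ : H₁ →ₗ[K] A₁)
    (hL₀ker : ∀ σ, ds₀ (L₀ σ) = 0)
    (hL₀sec : ∀ σ, Pi₀ (L₀ σ) = σ)
    (hL₀E : ∀ σ, ds₁ (E₀ (L₀ σ)) = 0)
    (hL₁ker : ∀ τ, ds₁ (L₁ τ) = 0)
    (hL₁sec : ∀ τ, Pi₁ (L₁ τ) = τ)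
    (hL₁E : ∀ τ, ds₂ (E₁ (L₁ τ)) = 0)
    (hL₁uniq : ∀ (τ : H₁) (s : A₁),
      ds₁ s = 0 → Pi₁ s = τ → ds₂ (E₁ s) = 0 → s = L₁ τ) :
    (∀ σ : H₀, E₀ (L₀ σ) = L₁ (Pi₁ (E₀ (L₀ σ)))) ↔
      (∀ σ : H₀, ds₂ (E₁ (E₀ (L₀ σ))) = 0) := by
  constructor
  · intro h σ
    rw [h σ]
    exact hL₁E _
  · intro h σ
    exact hL₁uniq _ _ (hL₀E σ) rfl (h σ)
end

section
/- In the setting of a commuting BGG square — spaces A_k, A_{k+1} with subspaces Im∂* ⊆ Ker∂*, homologies H_j = Ker∂*_j/Im∂*_j with projections Π_j, maps E_k : A_k → A_{k+1}, splitting operators L_k : H_k → Ker∂*_k and L_{k+1} : H_{k+1} → Ker∂*_{k+1} satisfying Π_j ∘ L_j = Id, L_k(Π_k s) = s for every s ∈ Ker∂*_k with E_k(s) ∈ Ker∂*_{k+1}, and the commutativity E_k ∘ L_k = L_{k+1} ∘ D_k where D_k = Π_{k+1} ∘ E_k ∘ L_k — the maps Π_k and L_k restrict to mutually inverse bijections between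 Ker(E_k) ∩ Ker(∂*_k) and Ker(D_k) ⊆ H_k. -/
/-- in a commuting BGG square (Theorem 3.3 of the paper), `Π₀` and `L₀`
restrict to mutually inverse bijections between `Ker E₀ ∩ Ker ∂*₀` and `Ker D₀`,
where `D₀ = Π₁ ∘ E₀ ∘ L₀`. -/
theorem bgg_kernel_correspondence
    {K : Type*} [Field K] {A₀ A₁ P₀ P₁ H₀ H₁ : Type*}
    [AddCommGroup A₀] [Module K A₀] [AddCommGroup A₁] [Module K A₁]
    [AddCommGroup P₀] [Module K P₀] [AddCommGroup P₁] [Module K P₁]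
    [AddCommGroup H₀] [Module K H₀] [AddCommGroup H₁] [Module K H₁]
    (ds₀ : A₀ →ₗ[K] P₀) (ds₁ : A₁ →ₗ[K] P₁)
    (E₀ : A₀ →ₗ[K] A₁)
    (Pi₀ : A₀ →ₗ[K] H₀) (Pi₁ : A₁ →ₗ[K] H₁)
    (L₀ : H₀ →ₗ[K] A₀) (L₁ : H₁ →ₗ[K] A₁)
    (hL₀ker : ∀ σ, ds₀ (L₀ σ) = 0)
    (hL₀sec : ∀ σ, Pi₀ (L₀ σ) = σ)
    (hL₁sec : ∀ τ, Pi₁ (L₁ τ) = τ)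
    -- characterization: L₀ recovers any cycle whose E₀-image is a cycle
    (hL₀char : ∀ s : A₀, ds₀ s = 0 → ds₁ (E₀ s) = 0 → L₀ (Pi₀ s) = s)
    -- commutativity of the square, D₀ := Π₁ ∘ E₀ ∘ L₀
    (hcomm : ∀ σ : H₀, E₀ (L₀ σ) = L₁ (Pi₁ (E₀ (L₀ σ)))) :
    (∀ s : A₀, E₀ s = 0 → ds₀ s = 0 →
        Pi₁ (E₀ (L₀ (Pi₀ s))) = 0 ∧ L₀ (Pi₀ s) = s) ∧
    (∀ σ : H₀, Pi₁ (E₀ (L₀ σ)) = 0 →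
        E₀ (L₀ σ) = 0 ∧ ds₀ (L₀ σ) = 0 ∧ Pi₀ (L₀ σ) = σ) := by
  constructor
  · intro s hE hds
    have h : L₀ (Pi₀ s) = s := hL₀char s hds (by rw [hE]; simp)
    refine ⟨?_, h⟩
    rw [h, hE]; simp
  · intro σ hD
    refine ⟨?_, hL₀ker σ, hL₀sec σ⟩
    rw [hcomm σ, hD]; simp
end
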